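/- arXiv:2409.12665 — 2 statements merged into one kernel-verified Lean document; each statement's English description precedes it below -/
import Mathlib

section
/- The improper integral ∫_0^∞ x / sinh(x) dx converges and equals π²/4. -/
open Real MeasureTheory

lemma hasSum_aux {x : ℝ} (hx : 0 < x) :
    HasSum (fun n : ℕ => 2 * x * Real.exp (-((2 * n + 1 : ℝ) * x))) (x / Real.sinh x) := by
  have h1 : Real.exp (-(2 * x)) < 1 := by
    rw [Real.exp_lt_one_iff]; linarith
  have h0 : (0:ℝ) ≤ Real.exp (-(2 * x)) := (Real.exp_pos _).le
  have hg := (hasSum_geometric_of_lt_one h0 h1).mul_left (2 * x * Real.exp (-x))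
  have hsinh : Real.sinh x ≠ 0 := (Real.sinh_pos_iff.mpr hx).ne'
  have hxe : Real.exp x ≠ 0 := (Real.exp_pos x).ne'
  have hlt : 1 < Real.exp x := by
    have := Real.exp_lt_exp.mpr hx; rwa [Real.exp_zero] at this
  have h2 : Real.exp x ^ 2 - 1 ≠ 0 := by nlinarith
  have heq : ∀ n : ℕ, 2 * x * Real.exp (-x) * Real.exp (-(2*x)) ^ n
      = 2 * x * Real.exp (-((2 * n + 1 : ℝ) * x)) := by
    intro n
    rw [← Real.exp_nat_mul, mul_assoc, ← Real.exp_add]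
    congr 1
    ring
  simp only [heq] at hg
  have e2 : Real.exp (-(2*x)) = (Real.exp x ^ 2)⁻¹ := by
    rw [Real.exp_neg, two_mul, Real.exp_add, sq]
  have hval : 2 * x * Real.exp (-x) * (1 - Real.exp (-(2*x)))⁻¹ = x / Real.sinh x := by
    rw [eq_div_iff hsinh, Real.sinh_eq, Real.exp_neg, e2]
    have h2' : (-1 + Real.exp x ^ 2) ≠ 0 := by nlinarith
    field_simp
  rwa [hval] at hg

lemma integrable_term {c : ℝ} (hc : 0 < c) :
    IntegrableOn (fun x : ℝ => 2 * x * Real.exp (-(c * x))) (Set.Ioi 0) := by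
  have h := integrableOn_rpow_mul_exp_neg_mul_rpow (p := 1) (s := 1) (b := c)
    (by norm_num) zero_lt_one hc
  simp only [Real.rpow_one] at h
  have h2 := h.const_mul 2
  simp only [neg_mul] at h ⊢
  exact IntegrableOn.congr_fun h2 (fun x _ => by ring) measurableSet_Ioi

lemma integral_term {c : ℝ} (hc : 0 < c) :
    ∫ x in Set.Ioi (0:ℝ), 2 * x * Real.exp (-(c * x)) = 2 / c ^ 2 := by
  have h := Real.integral_rpow_mul_exp_neg_mul_Ioi (a := 2) (r := c) (by norm_num) hc
  simp only [show (2:ℝ) - 1 = 1 by norm_num, Real.rpow_one, Real.Gamma_two, mul_one] at h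
  calc ∫ x in Set.Ioi (0:ℝ), 2 * x * Real.exp (-(c * x))
      = 2 * ∫ x in Set.Ioi (0:ℝ), x * Real.exp (-(c * x)) := by
        rw [← integral_const_mul]; congr 1; ext x; ring
    _ = 2 / c ^ 2 := by
        rw [h, Real.rpow_two, div_pow, one_pow]
        ring

lemma hasSum_odd_inv_sq : HasSum (fun n : ℕ => (1:ℝ) / (2 * n + 1) ^ 2) (π ^ 2 / 8) := by
  have htot : HasSum (fun n : ℕ => (1:ℝ) / (n:ℝ) ^ 2) (π ^ 2 / 6) := hasSum_zeta_two
  have heven : HasSum (fun k : ℕ => (1:ℝ) / ((2 * k : ℕ) : ℝ) ^ 2) (π ^ 2 / 24) := by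
    have := htot.mul_left (1/4)
    have h4 : (1/4 : ℝ) * (π ^ 2 / 6) = π ^ 2 / 24 := by ring
    rw [h4] at this
    have hfe : (fun k : ℕ => (1:ℝ) / ((2 * k : ℕ) : ℝ) ^ 2)
        = fun k : ℕ => (1/4 : ℝ) * ((1:ℝ) / (k:ℝ) ^ 2) := by
      funext k
      push_cast
      rw [div_mul_div_comm, one_mul]
      congr 1
      ring
    rw [hfe]
    exact this
  have hinj : Function.Injective (fun k : ℕ => 2 * k + 1) := by
    intro a b h; simp only [] at h; omega
  have hsumodd : Summable (fun k : ℕ => (1:ℝ) / ((2 * k + 1 : ℕ) : ℝ) ^ 2) :=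
    htot.summable.comp_injective hinj
  have hodd := hsumodd.hasSum
  have htot' := HasSum.even_add_odd (f := fun n : ℕ => (1:ℝ) / (n:ℝ) ^ 2) heven hodd
  have hkey : π ^ 2 / 24 + (∑' k : ℕ, (1:ℝ) / ((2 * k + 1 : ℕ) : ℝ) ^ 2) = π ^ 2 / 6 :=
    htot'.unique htot
  have hval : (∑' k : ℕ, (1:ℝ) / ((2 * k + 1 : ℕ) : ℝ) ^ 2) = π ^ 2 / 8 := by linarith
  rw [hval] at hodd
  have hfe2 : (fun n : ℕ => (1:ℝ) / (2 * n + 1) ^ 2)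
      = fun k : ℕ => (1:ℝ) / ((2 * k + 1 : ℕ) : ℝ) ^ 2 := by
    funext k; push_cast; ring
  rw [hfe2]
  exact hodd

lemma integrableOn_main : IntegrableOn (fun x : ℝ => x / Real.sinh x) (Set.Ioi 0) := by
  have hmeas : Measurable (fun x : ℝ => x / Real.sinh x) :=
    measurable_id.div Real.measurable_sinh
  have h1 : IntegrableOn (fun x : ℝ => x / Real.sinh x) (Set.Ioc 0 1) := by
    apply Measure.integrableOn_of_bounded (M := 1)
    · simp [Real.volume_Ioc]
    · exact hmeas.aestronglyMeasurable
    · rw [ae_restrict_iff' measurableSet_Ioc]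
      filter_upwards with x hx
      obtain ⟨hx0, hx1⟩ := hx
      have hs : x < Real.sinh x := Real.self_lt_sinh_iff.mpr hx0
      rw [Real.norm_eq_abs, abs_div, abs_of_pos hx0, abs_of_pos (by linarith)]
      rw [div_le_one (by linarith)]
      linarith
  have h2 : IntegrableOn (fun x : ℝ => x / Real.sinh x) (Set.Ioi 1) := by
    have hg0 : IntegrableOn (fun x : ℝ => 2 * (2 * x * Real.exp (-(1 * x)))) (Set.Ioi 0) :=
      (integrable_term one_pos).const_mul 2
    have hg : IntegrableOn (fun x : ℝ => 2 * (2 * x * Real.exp (-(1 * x)))) (Set.Ioi 1) :=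
      hg0.mono_set (Set.Ioi_subset_Ioi zero_le_one)
    apply hg.mono' (hmeas.aestronglyMeasurable.restrict)
    rw [ae_restrict_iff' measurableSet_Ioi]
    filter_upwards with x hx
    rw [Set.mem_Ioi] at hx
    have hx0 : (0:ℝ) < x := by linarith
    have hsinh : 0 < Real.sinh x := Real.sinh_pos_iff.mpr hx0
    have hab : Real.exp x * Real.exp (-x) = 1 := by
      rw [← Real.exp_add]; simp
    have hb2 : Real.exp (-x) ^ 2 ≤ 1/2 := by
      have e1 : Real.exp (-x) ^ 2 = Real.exp (-(2*x)) := by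
        rw [sq, ← Real.exp_add]; ring_nf
      have e2 : Real.exp (-(2*x)) ≤ Real.exp (-2) := by
        apply Real.exp_le_exp.mpr; linarith
      have e3 : (3:ℝ) ≤ Real.exp 2 := by
        have := Real.add_one_le_exp (2:ℝ); linarith
      have e4 : Real.exp (-2) ≤ 1/2 := by
        rw [Real.exp_neg]
        rw [inv_le_comm₀ (by linarith) (by norm_num)]
        linarith
      linarith [e1 ▸ e2]
    rw [Real.norm_eq_abs, abs_div, abs_of_pos hx0, abs_of_pos hsinh,
      div_le_iff₀ hsinh, Real.sinh_eq]
    have hbpos : 0 < Real.exp (-x) := Real.exp_pos _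
    have hxab : x * (Real.exp x * Real.exp (-x)) = x := by rw [hab, mul_one]
    simp only [one_mul]
    nlinarith [hxab, mul_nonneg hx0.le (by linarith : (0:ℝ) ≤ 1/2 - Real.exp (-x) ^ 2)]
  have := h1.union h2
  rwa [Set.Ioc_union_Ioi_eq_Ioi zero_le_one] at this

/-- The improper integral `∫_0^∞ x / sinh x dx` converges and equals `π²/4`. -/
theorem integral_x_div_sinh :
    IntegrableOn (fun x : ℝ => x / Real.sinh x) (Set.Ioi 0) ∧
    ∫ x in Set.Ioi (0 : ℝ), x / Real.sinh x = π ^ 2 / 4 := by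
  refine ⟨integrableOn_main, ?_⟩
  set F : ℕ → ℝ → ℝ := fun n x => 2 * x * Real.exp (-((2 * n + 1 : ℝ) * x)) with hF
  have key : ∀ n : ℕ, (0:ℝ) < 2 * n + 1 := fun n => by positivity
  have hFint : ∀ n, Integrable (F n) (volume.restrict (Set.Ioi 0)) :=
    fun n => integrable_term (key n)
  have hFval : ∀ n, ∫ x in Set.Ioi (0:ℝ), F n x = 2 / (2 * n + 1) ^ 2 :=
    fun n => integral_term (key n)
  have hnorm : ∀ n, ∫ x in Set.Ioi (0:ℝ), ‖F n x‖ = 2 / (2 * n + 1) ^ 2 := by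
    intro n
    rw [← hFval n]
    apply setIntegral_congr_fun measurableSet_Ioi
    intro x hx
    rw [Set.mem_Ioi] at hx
    show ‖F n x‖ = F n x
    rw [Real.norm_eq_abs, abs_of_nonneg]
    simp only [hF]
    positivity
  have hS : HasSum (fun n : ℕ => 2 / (2 * (n:ℝ) + 1) ^ 2) (π ^ 2 / 4) := by
    have := hasSum_odd_inv_sq.mul_left 2
    have h4 : (2:ℝ) * (π ^ 2 / 8) = π ^ 2 / 4 := by ring
    rw [h4] at this
    have hfe : (fun n : ℕ => (2:ℝ) / (2 * (n:ℝ) + 1) ^ 2)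
        = fun n : ℕ => (2:ℝ) * ((1:ℝ) / (2 * (n:ℝ) + 1) ^ 2) := by
      funext n; rw [mul_one_div]
    rw [hfe]
    exact this
  have hsummable : Summable (fun n => ∫ x in Set.Ioi (0:ℝ), ‖F n x‖) := by
    simp_rw [hnorm]
    exact hS.summable
  have hswap := hasSum_integral_of_summable_integral_norm hFint hsummable
  have hint_eq : ∫ x in Set.Ioi (0:ℝ), (∑' n, F n x) = ∫ x in Set.Ioi (0:ℝ), x / Real.sinh x := by
    apply setIntegral_congr_fun measurableSet_Ioi
    intro x hx
    rw [Set.mem_Ioi] at hx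
    exact (hasSum_aux hx).tsum_eq
  rw [hint_eq] at hswap
  have hfe2 : (fun n => ∫ x in Set.Ioi (0:ℝ), F n x) = fun n : ℕ => 2 / (2 * (n:ℝ) + 1) ^ 2 :=
    funext hFval
  rw [hfe2] at hswap
  exact (hS.unique hswap).symm
end

section
/- Define N(λ) = #{ (p,q) ∈ ℤ² : 2π(p² + q²) ≤ λ } + Σ_{m ≥ 1, l ≥ 0, m(2l+1) ≤ λ} 2m, the eigenvalue counting function of the sub-Riemannian Laplacian on the flat Heisenberg quotient. Then N(λ)/λ² → π²/8 as λ → +∞. (This is the Weyl law N(λ) ∼ (∫_M |α_g ∧ dα_g| / 32) λ² with Popp volume ∫_M |α_g ∧ dα_g| = 4π² for this example.) -/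
open Real Filter Topology

/-- The eigenvalue counting function of the sub-Riemannian Laplacian on the flat
Heisenberg quotient: torus eigenvalues `2π(p²+q²)` plus the eigenvalues `m(2l+1)`
(`m ≥ 1`, `l ≥ 0`) counted with multiplicity `2m`. -/
noncomputable def heisenbergCounting (lam : ℝ) : ℝ :=
  (Nat.card {p : ℤ × ℤ // 2 * π * ((p.1 : ℝ) ^ 2 + (p.2 : ℝ) ^ 2) ≤ lam} : ℝ) +
  ∑' ml : {ml : ℕ × ℕ // ((ml.1 : ℝ) + 1) * (2 * (ml.2 : ℝ) + 1) ≤ lam},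
    (2 * ((ml.1.1 : ℝ) + 1))

/-- The odd Basel sum. -/
lemma hb_basel_odd : HasSum (fun l : ℕ => (1 / (2 * (l : ℝ) + 1)) ^ 2) (π ^ 2 / 8) := by
  have htot : HasSum (fun n : ℕ => (1 : ℝ) / (n : ℝ) ^ 2) (π ^ 2 / 6) := hasSum_zeta_two
  have heven : HasSum (fun k : ℕ => (1 : ℝ) / ((2 * k : ℕ) : ℝ) ^ 2) (π ^ 2 / 24) := by
    have h := htot.mul_left (1 / 4)
    have hfun : (fun k : ℕ => (1 / 4) * ((1 : ℝ) / (k : ℝ) ^ 2))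
        = fun k : ℕ => (1 : ℝ) / ((2 * k : ℕ) : ℝ) ^ 2 := by
      funext k
      push_cast
      rw [mul_pow, div_mul_div_comm, one_mul]
      norm_num
    rw [hfun] at h
    have hval : (1 / 4 : ℝ) * (π ^ 2 / 6) = π ^ 2 / 24 := by ring
    rwa [hval] at h
  have hodd : Summable (fun k : ℕ => (1 : ℝ) / ((2 * k + 1 : ℕ) : ℝ) ^ 2) := by
    have hinj : Function.Injective (fun k : ℕ => 2 * k + 1) := by
      intro a b h
      simp only at h
      omega
    exact htot.summable.comp_injective hinj
  obtain ⟨b, hb⟩ := hodd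
  have htot' : HasSum (fun n : ℕ => (1 : ℝ) / (n : ℝ) ^ 2) (π ^ 2 / 24 + b) :=
    HasSum.even_add_odd (f := fun n : ℕ => (1 : ℝ) / (n : ℝ) ^ 2) heven hb
  have hbval : b = π ^ 2 / 8 := by
    have := htot'.unique htot
    linarith
  rw [hbval] at hb
  have hfun : (fun l : ℕ => (1 / (2 * (l : ℝ) + 1)) ^ 2)
      = fun k : ℕ => (1 : ℝ) / ((2 * k + 1 : ℕ) : ℝ) ^ 2 := by
    funext l
    push_cast
    rw [div_pow, one_pow]
  rw [hfun]
  exact hb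

lemma hb_sum_range : ∀ n : ℕ, ∑ m ∈ Finset.range n, (2 * ((m : ℝ) + 1)) = (n : ℝ) ^ 2 + n := by
  intro n
  induction n with
  | zero => simp
  | succ k ih =>
    rw [Finset.sum_range_succ, ih]
    push_cast
    ring

lemma hb_sum_odd_inv_le (L : ℕ) :
    ∑ l ∈ Finset.range L, (1 : ℝ) / (2 * (l : ℝ) + 1) ≤ 2 * Real.sqrt L := by
  have key : ∀ l ∈ Finset.range L, (1 : ℝ) / (2 * (l : ℝ) + 1)
      ≤ 2 * (Real.sqrt ((l : ℕ) + 1 : ℕ) - Real.sqrt l) := by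
    intro l _
    have ha : (0 : ℝ) ≤ (l : ℝ) := Nat.cast_nonneg l
    have h2l : (0 : ℝ) < 2 * (l : ℝ) + 1 := by linarith
    set a := Real.sqrt l with hadef
    set b := Real.sqrt ((l : ℕ) + 1 : ℕ) with hbdef
    have hb1 : b = Real.sqrt ((l : ℝ) + 1) := by rw [hbdef]; norm_cast
    have h1 : a ≤ b := by rw [hb1]; exact Real.sqrt_le_sqrt (by linarith)
    have h2 : b ^ 2 = (l : ℝ) + 1 := by rw [hb1]; exact Real.sq_sqrt (by linarith)
    have h3 : a ^ 2 = (l : ℝ) := Real.sq_sqrt ha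
    have ha0 : 0 ≤ a := Real.sqrt_nonneg _
    have hb0 : 0 ≤ b := Real.sqrt_nonneg _
    have h4 : b ≤ 2 * (l : ℝ) + 1 := by nlinarith
    have key2 : (b - a) * (b + a) = 1 := by nlinarith
    rw [div_le_iff₀ h2l]
    nlinarith [mul_le_mul_of_nonneg_left (by linarith : b + a ≤ 2 * (2 * (l : ℝ) + 1))
      (by linarith : (0 : ℝ) ≤ b - a)]
  have := Finset.sum_le_sum key
  refine this.trans ?_
  rw [← Finset.mul_sum, Finset.sum_range_sub (fun n : ℕ => Real.sqrt n)]
  simp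

/-- The discrete sum as a finite sum of floor expressions. -/
lemma hb_S_eq (lam : ℝ) (hlam : 1 ≤ lam) :
    (∑' ml : {ml : ℕ × ℕ // ((ml.1 : ℝ) + 1) * (2 * (ml.2 : ℝ) + 1) ≤ lam},
      (2 * ((ml.1.1 : ℝ) + 1)))
    = ∑ l ∈ Finset.range ⌈lam⌉₊,
        ((⌊lam / (2 * (l : ℝ) + 1)⌋₊ : ℝ) ^ 2 + (⌊lam / (2 * (l : ℝ) + 1)⌋₊ : ℝ)) := by
  have hlam0 : (0 : ℝ) ≤ lam := by linarith
  set L := ⌈lam⌉₊ with hL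
  set A : Set (ℕ × ℕ) := {ml | ((ml.1 : ℝ) + 1) * (2 * (ml.2 : ℝ) + 1) ≤ lam} with hA
  set f : ℕ × ℕ → ℝ := fun ml => 2 * ((ml.1 : ℝ) + 1) with hf
  have h1 : (∑' ml : {ml : ℕ × ℕ // ((ml.1 : ℝ) + 1) * (2 * (ml.2 : ℝ) + 1) ≤ lam},
      (2 * ((ml.1.1 : ℝ) + 1))) = ∑' ml : ℕ × ℕ, A.indicator f ml := tsum_subtype A f
  rw [h1]
  have hout : ∀ ml : ℕ × ℕ, ml ∉ Finset.range L ×ˢ Finset.range L → A.indicator f ml = 0 := by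
    intro ml hml
    rw [Set.indicator_apply_eq_zero]
    intro hAml
    exfalso
    apply hml
    have hcond : ((ml.1 : ℝ) + 1) * (2 * (ml.2 : ℝ) + 1) ≤ lam := hAml
    have hm1 : (0 : ℝ) ≤ (ml.1 : ℝ) + 1 := by positivity
    have hl1 : (1 : ℝ) ≤ 2 * (ml.2 : ℝ) + 1 := by
      have := Nat.cast_nonneg (α := ℝ) ml.2
      linarith
    have hmle : ((ml.1 : ℝ) + 1) ≤ lam :=
      le_trans (le_mul_of_one_le_right hm1 hl1) hcond
    have hlle : (2 * (ml.2 : ℝ) + 1) ≤ lam := by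
      refine le_trans ?_ hcond
      nlinarith
    have hm : ml.1 < L := by
      have : ((ml.1 : ℝ) + 1) ≤ (L : ℝ) := hmle.trans (Nat.le_ceil lam)
      have : (ml.1 : ℕ) + 1 ≤ L := by exact_mod_cast this
      omega
    have hl : ml.2 < L := by
      have : (2 * (ml.2 : ℝ) + 1) ≤ (L : ℝ) := hlle.trans (Nat.le_ceil lam)
      have : 2 * (ml.2 : ℕ) + 1 ≤ L := by exact_mod_cast this
      omega
    exact Finset.mem_product.2 ⟨Finset.mem_range.2 hm, Finset.mem_range.2 hl⟩
  rw [tsum_eq_sum hout, Finset.sum_product, Finset.sum_comm]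
  refine Finset.sum_congr rfl ?_
  intro l _
  have h2l : (0 : ℝ) < 2 * (l : ℝ) + 1 := by positivity
  set n := ⌊lam / (2 * (l : ℝ) + 1)⌋₊ with hn
  have hnL : n ≤ L := by
    have h5 : lam / (2 * (l : ℝ) + 1) ≤ lam := by
      apply div_le_self hlam0
      linarith [Nat.cast_nonneg (α := ℝ) l]
    calc n ≤ ⌊lam⌋₊ := Nat.floor_mono h5
    _ ≤ ⌈lam⌉₊ := Nat.floor_le_ceil lam
  have hind : ∀ m : ℕ, A.indicator f (m, l)
      = if m < n then 2 * ((m : ℝ) + 1) else 0 := by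
    intro m
    have hiff : ((m, l) ∈ A) ↔ m < n := by
      rw [hA]
      simp only [Set.mem_setOf_eq]
      rw [← le_div_iff₀ h2l, hn]
      rw [show (m < ⌊lam / (2 * (l : ℝ) + 1)⌋₊ ↔ m + 1 ≤ ⌊lam / (2 * (l : ℝ) + 1)⌋₊) from Iff.rfl]
      rw [Nat.le_floor_iff (by positivity)]
      push_cast
      rfl
    by_cases h : m < n
    · rw [if_pos h, Set.indicator_of_mem (hiff.2 h)]
    · rw [if_neg h, Set.indicator_of_notMem (fun hc => h (hiff.1 hc))]
  calc ∑ m ∈ Finset.range L, A.indicator f (m, l)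
      = ∑ m ∈ Finset.range L, (if m < n then 2 * ((m : ℝ) + 1) else 0) :=
        Finset.sum_congr rfl fun m _ => hind m
    _ = ∑ m ∈ Finset.range n, (if m < n then 2 * ((m : ℝ) + 1) else 0) := by
        refine (Finset.sum_subset (Finset.range_subset_range.2 hnL) ?_).symm
        intro m _ hm
        rw [Finset.mem_range] at hm
        rw [if_neg hm]
    _ = ∑ m ∈ Finset.range n, (2 * ((m : ℝ) + 1)) := by
        refine Finset.sum_congr rfl ?_
        intro m hm
        rw [if_pos (Finset.mem_range.1 hm)]
    _ = (n : ℝ) ^ 2 + n := hb_sum_range n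

/-- Weyl law for the flat Heisenberg quotient: `N(λ)/λ² → π²/8` as `λ → +∞`. -/
theorem heisenberg_weyl_law :
    Tendsto (fun lam : ℝ => heisenbergCounting lam / lam ^ 2) atTop (𝓝 (π ^ 2 / 8)) := by
  -- Torus part tends to zero
  have hTbound : ∀ lam : ℝ, 1 ≤ lam →
      (Nat.card {p : ℤ × ℤ // 2 * π * ((p.1 : ℝ) ^ 2 + (p.2 : ℝ) ^ 2) ≤ lam} : ℝ)
        ≤ 25 * lam := by
    intro lam hlam
    have hlam0 : (0 : ℝ) ≤ lam := by linarith
    set B : ℤ := ⌈Real.sqrt lam⌉ with hB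
    have hs0 : (0 : ℝ) ≤ Real.sqrt lam := Real.sqrt_nonneg lam
    have hB0 : 0 ≤ B := Int.ceil_nonneg hs0
    have hBle : (B : ℝ) ≤ Real.sqrt lam + 1 := (Int.ceil_lt_add_one _).le
    have hsq : Real.sqrt lam ^ 2 = lam := Real.sq_sqrt hlam0
    have hs1 : 1 ≤ Real.sqrt lam := by nlinarith
    have hsub : {p : ℤ × ℤ | 2 * π * ((p.1 : ℝ) ^ 2 + (p.2 : ℝ) ^ 2) ≤ lam}
        ⊆ ↑(Finset.Icc ((-B, -B) : ℤ × ℤ) (B, B)) := by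
      intro p hp
      simp only [Set.mem_setOf_eq] at hp
      have hpi : (3 : ℝ) ≤ π := by linarith [Real.pi_gt_three]
      have h1 : (p.1 : ℝ) ^ 2 ≤ lam := by nlinarith [sq_nonneg ((p.1 : ℝ)), sq_nonneg ((p.2 : ℝ))]
      have h2 : (p.2 : ℝ) ^ 2 ≤ lam := by nlinarith [sq_nonneg ((p.1 : ℝ)), sq_nonneg ((p.2 : ℝ))]
      have habs1 : |(p.1 : ℝ)| ≤ Real.sqrt lam := by
        rw [← Real.sqrt_sq_eq_abs]; exact Real.sqrt_le_sqrt h1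
      have habs2 : |(p.2 : ℝ)| ≤ Real.sqrt lam := by
        rw [← Real.sqrt_sq_eq_abs]; exact Real.sqrt_le_sqrt h2
      rw [abs_le] at habs1 habs2
      have hBR : Real.sqrt lam ≤ (B : ℝ) := Int.le_ceil _
      simp only [Finset.coe_Icc, Set.mem_Icc, Prod.mk_le_mk]
      refine ⟨⟨?_, ?_⟩, ?_, ?_⟩
      · exact_mod_cast (by push_cast; linarith : ((-B : ℤ) : ℝ) ≤ (p.1 : ℝ))
      · exact_mod_cast (by push_cast; linarith : ((-B : ℤ) : ℝ) ≤ (p.2 : ℝ))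
      · exact_mod_cast (by push_cast; linarith : ((p.1 : ℝ)) ≤ ((B : ℤ) : ℝ))
      · exact_mod_cast (by push_cast; linarith : ((p.2 : ℝ)) ≤ ((B : ℤ) : ℝ))
    have hc : Nat.card {p : ℤ × ℤ // 2 * π * ((p.1 : ℝ) ^ 2 + (p.2 : ℝ) ^ 2) ≤ lam}
        = {p : ℤ × ℤ | 2 * π * ((p.1 : ℝ) ^ 2 + (p.2 : ℝ) ^ 2) ≤ lam}.ncard :=
      Nat.card_coe_set_eq _
    have h2 := Set.ncard_le_ncard hsub (Finset.finite_toSet _)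
    rw [Set.ncard_coe_finset] at h2
    have hcard : (Finset.Icc ((-B, -B) : ℤ × ℤ) (B, B)).card
        = (B + 1 - -B).toNat * (B + 1 - -B).toNat := by
      rw [Finset.card_Icc_prod]
      simp [Int.card_Icc]
    have htn : (((B + 1 - -B).toNat : ℝ)) ≤ 5 * Real.sqrt lam := by
      have hnn : (0 : ℤ) ≤ B + 1 - -B := by omega
      have heq : (((B + 1 - -B).toNat : ℝ)) = 2 * (B : ℝ) + 1 := by
        rw [show (((B + 1 - -B).toNat : ℕ) : ℝ) = ((((B + 1 - -B).toNat : ℕ) : ℤ) : ℝ) by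
          push_cast; ring, Int.toNat_of_nonneg hnn]
        push_cast
        ring
      rw [heq]
      linarith
    have htn0 : (0 : ℝ) ≤ (((B + 1 - -B).toNat : ℝ)) := Nat.cast_nonneg _
    calc (Nat.card {p : ℤ × ℤ // 2 * π * ((p.1 : ℝ) ^ 2 + (p.2 : ℝ) ^ 2) ≤ lam} : ℝ)
        ≤ ((Finset.Icc ((-B, -B) : ℤ × ℤ) (B, B)).card : ℝ) := by
          rw [hc]; exact_mod_cast h2
      _ = (((B + 1 - -B).toNat : ℝ)) * (((B + 1 - -B).toNat : ℝ)) := by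
          rw [hcard]; push_cast; ring
      _ ≤ (5 * Real.sqrt lam) * (5 * Real.sqrt lam) := by
          exact mul_le_mul htn htn htn0 (by positivity)
      _ = 25 * lam := by nlinarith
  have hT : Tendsto (fun lam : ℝ =>
      (Nat.card {p : ℤ × ℤ // 2 * π * ((p.1 : ℝ) ^ 2 + (p.2 : ℝ) ^ 2) ≤ lam} : ℝ) / lam ^ 2)
      atTop (𝓝 0) := by
    have h25 : Tendsto (fun lam : ℝ => 25 / lam) atTop (𝓝 0) :=
      tendsto_const_nhds.div_atTop tendsto_id
    refine tendsto_of_tendsto_of_tendsto_of_le_of_le' tendsto_const_nhds h25 ?_ ?_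
    · filter_upwards [eventually_ge_atTop (1 : ℝ)] with lam hlam
      positivity
    · filter_upwards [eventually_ge_atTop (1 : ℝ)] with lam hlam
      have h := hTbound lam hlam
      have hpos : (0 : ℝ) < lam := by linarith
      rw [div_le_div_iff₀ (by positivity) hpos]
      nlinarith
  -- Error term tends to zero
  have he : Tendsto (fun lam : ℝ => 2 * Real.sqrt (lam + 1) / lam) atTop (𝓝 0) := by
    have h1 : Tendsto (fun lam : ℝ => (lam + 1) / lam ^ 2) atTop (𝓝 0) := by
      have ha := tendsto_pow_div_pow_atTop_zero (𝕜 := ℝ) (show 1 < 2 by norm_num)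
      have hb := tendsto_pow_div_pow_atTop_zero (𝕜 := ℝ) (show 0 < 2 by norm_num)
      have hsum := ha.add hb
      rw [add_zero] at hsum
      refine hsum.congr fun x => ?_
      rw [← add_div]
      norm_num
    have h2 : Tendsto (fun lam : ℝ => Real.sqrt ((lam + 1) / lam ^ 2)) atTop (𝓝 0) := by
      have := (Real.continuous_sqrt.tendsto 0).comp h1
      simpa [Function.comp_def] using this
    have h3 := h2.const_mul (2 : ℝ)
    rw [mul_zero] at h3
    refine h3.congr' ?_
    filter_upwards [eventually_gt_atTop (0 : ℝ)] with lam hlam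
    rw [Real.sqrt_div (by linarith) , Real.sqrt_sq hlam.le]
    ring
  -- partial sums tend to π²/8
  have hQ := hb_basel_odd
  have hPt : Tendsto (fun lam : ℝ =>
      ∑ l ∈ Finset.range ⌈lam⌉₊, (1 / (2 * (l : ℝ) + 1)) ^ 2) atTop (𝓝 (π ^ 2 / 8)) :=
    (hQ.tendsto_sum_nat).comp tendsto_nat_ceil_atTop
  -- main part
  have hS : Tendsto (fun lam : ℝ =>
      (∑' ml : {ml : ℕ × ℕ // ((ml.1 : ℝ) + 1) * (2 * (ml.2 : ℝ) + 1) ≤ lam},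
        (2 * ((ml.1.1 : ℝ) + 1))) / lam ^ 2) atTop (𝓝 (π ^ 2 / 8)) := by
    have hlowT : Tendsto (fun lam : ℝ =>
        (∑ l ∈ Finset.range ⌈lam⌉₊, (1 / (2 * (l : ℝ) + 1)) ^ 2)
          - 2 * Real.sqrt (lam + 1) / lam) atTop (𝓝 (π ^ 2 / 8)) := by
      have := hPt.sub he
      rwa [sub_zero] at this
    have hupT : Tendsto (fun lam : ℝ =>
        (π ^ 2 / 8) + 2 * Real.sqrt (lam + 1) / lam) atTop (𝓝 (π ^ 2 / 8)) := by
      have hc : Tendsto (fun _ : ℝ => π ^ 2 / 8) atTop (𝓝 (π ^ 2 / 8)) := tendsto_const_nhds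
      have := hc.add he
      rwa [add_zero] at this
    refine tendsto_of_tendsto_of_tendsto_of_le_of_le' hlowT hupT ?_ ?_
    · -- lower bound
      filter_upwards [eventually_ge_atTop (1 : ℝ)] with lam hlam
      have hlam0 : (0 : ℝ) < lam := by linarith
      rw [hb_S_eq lam hlam]
      set L := ⌈lam⌉₊ with hLdef
      have hLle : (L : ℝ) ≤ lam + 1 := (Nat.ceil_lt_add_one (by linarith)).le
      have hsqL : Real.sqrt L ≤ Real.sqrt (lam + 1) := Real.sqrt_le_sqrt hLle
      have hH := hb_sum_odd_inv_le L
      rw [le_div_iff₀ (by positivity)]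
      have hterm : ∀ l ∈ Finset.range L,
          lam ^ 2 * (1 / (2 * (l : ℝ) + 1)) ^ 2 - lam * (1 / (2 * (l : ℝ) + 1))
            ≤ ((⌊lam / (2 * (l : ℝ) + 1)⌋₊ : ℝ) ^ 2 + (⌊lam / (2 * (l : ℝ) + 1)⌋₊ : ℝ)) := by
        intro l _
        have h2l : (0 : ℝ) < 2 * (l : ℝ) + 1 := by positivity
        set x := lam / (2 * (l : ℝ) + 1) with hx
        have hx0 : (0 : ℝ) ≤ x := by positivity
        have hfl : x - 1 < (⌊x⌋₊ : ℝ) := Nat.sub_one_lt_floor x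
        have hfl0 : (0 : ℝ) ≤ (⌊x⌋₊ : ℝ) := Nat.cast_nonneg _
        have hxe : lam * (1 / (2 * (l : ℝ) + 1)) = x := by rw [hx, mul_one_div]
        have hxe2 : lam ^ 2 * (1 / (2 * (l : ℝ) + 1)) ^ 2 = x ^ 2 := by
          rw [hx]; field_simp
        rw [hxe, hxe2]
        nlinarith [mul_nonneg (by linarith : (0 : ℝ) ≤ (⌊x⌋₊ : ℝ) - (x - 1))
          (by linarith : (0 : ℝ) ≤ (⌊x⌋₊ : ℝ) + x)]
      have hsum := Finset.sum_le_sum hterm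
      rw [Finset.sum_sub_distrib, ← Finset.mul_sum, ← Finset.mul_sum] at hsum
      have h6 : lam * (∑ l ∈ Finset.range L, (1 : ℝ) / (2 * (l : ℝ) + 1))
          ≤ 2 * Real.sqrt (lam + 1) * lam := by
        have h7 : (∑ l ∈ Finset.range L, (1 : ℝ) / (2 * (l : ℝ) + 1))
            ≤ 2 * Real.sqrt (lam + 1) := by linarith
        nlinarith
      have hdiv : (2 * Real.sqrt (lam + 1) / lam) * lam ^ 2
          = 2 * Real.sqrt (lam + 1) * lam := by
        field_simp
      rw [sub_mul, hdiv]
      linarith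
    · -- upper bound
      filter_upwards [eventually_ge_atTop (1 : ℝ)] with lam hlam
      have hlam0 : (0 : ℝ) < lam := by linarith
      rw [hb_S_eq lam hlam]
      set L := ⌈lam⌉₊ with hLdef
      have hLle : (L : ℝ) ≤ lam + 1 := (Nat.ceil_lt_add_one (by linarith)).le
      have hsqL : Real.sqrt L ≤ Real.sqrt (lam + 1) := Real.sqrt_le_sqrt hLle
      have hH := hb_sum_odd_inv_le L
      rw [div_le_iff₀ (by positivity)]
      have hterm : ∀ l ∈ Finset.range L,
          ((⌊lam / (2 * (l : ℝ) + 1)⌋₊ : ℝ) ^ 2 + (⌊lam / (2 * (l : ℝ) + 1)⌋₊ : ℝ))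
            ≤ lam ^ 2 * (1 / (2 * (l : ℝ) + 1)) ^ 2 + lam * (1 / (2 * (l : ℝ) + 1)) := by
        intro l _
        have h2l : (0 : ℝ) < 2 * (l : ℝ) + 1 := by positivity
        set x := lam / (2 * (l : ℝ) + 1) with hx
        have hx0 : (0 : ℝ) ≤ x := by positivity
        have hfl : (⌊x⌋₊ : ℝ) ≤ x := Nat.floor_le hx0
        have hfl0 : (0 : ℝ) ≤ (⌊x⌋₊ : ℝ) := Nat.cast_nonneg _
        have hxe : lam * (1 / (2 * (l : ℝ) + 1)) = x := by rw [hx, mul_one_div]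
        have hxe2 : lam ^ 2 * (1 / (2 * (l : ℝ) + 1)) ^ 2 = x ^ 2 := by
          rw [hx]; field_simp
        rw [hxe, hxe2]
        nlinarith
      have hsum := Finset.sum_le_sum hterm
      have hre : ∑ l ∈ Finset.range L,
          (lam ^ 2 * (1 / (2 * (l : ℝ) + 1)) ^ 2 + lam * (1 / (2 * (l : ℝ) + 1)))
          = lam ^ 2 * (∑ l ∈ Finset.range L, (1 / (2 * (l : ℝ) + 1)) ^ 2)
            + lam * (∑ l ∈ Finset.range L, (1 : ℝ) / (2 * (l : ℝ) + 1)) := by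
        rw [Finset.sum_add_distrib, Finset.mul_sum, Finset.mul_sum]
      rw [hre] at hsum
      have hQle : (∑ l ∈ Finset.range L, (1 / (2 * (l : ℝ) + 1)) ^ 2) ≤ π ^ 2 / 8 :=
        sum_le_hasSum _ (fun i _ => by positivity) hQ
      have h6 : lam * (∑ l ∈ Finset.range L, (1 : ℝ) / (2 * (l : ℝ) + 1))
          ≤ 2 * Real.sqrt (lam + 1) * lam := by
        have h7 : (∑ l ∈ Finset.range L, (1 : ℝ) / (2 * (l : ℝ) + 1))
            ≤ 2 * Real.sqrt (lam + 1) := by linarith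
        nlinarith
      have h8 : lam ^ 2 * (∑ l ∈ Finset.range L, (1 / (2 * (l : ℝ) + 1)) ^ 2)
          ≤ lam ^ 2 * (π ^ 2 / 8) := by nlinarith
      have hdiv : (2 * Real.sqrt (lam + 1) / lam) * lam ^ 2
          = 2 * Real.sqrt (lam + 1) * lam := by
        field_simp
      rw [add_mul, hdiv]
      linarith
  have hfin := hT.add hS
  rw [zero_add] at hfin
  refine hfin.congr fun lam => ?_
  simp only [heisenbergCounting]
  rw [add_div]
end
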